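/- Kernel of the linearized Schrödinger operator: let φ be a tuple of essentially bounded measurable functions and let h = (h_1,…,h_N) with h_i ∈ L²(X_i,m_i). Then h_i + L_{φ,i}(h) = 0 m_i-a.e. for every i = 1,…,N if and only if there exist real constants c_1,…,c_N with Σ_{i=1}^N c_i = 0 and h_i = c_i m_i-a.e. for every i. In particular, the kernel of id + L_φ on ∏_{i=1}^N L²(X_i,m_i) has dimension N−1. -/

import Mathlib

open MeasureTheory Filter
open scoped ENNReal

noncomputable section

/-- The density kernel `γ_φ(x) = K(x) exp(∑_j φ_j(x_j))`. -/
def gammaFn {N : ℕ} {X : Fin N → Type*} (K : (∀ i, X i) → ℝ) (φ : ∀ i, X i → ℝ)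
    (x : ∀ i, X i) : ℝ :=
  K x * Real.exp (∑ j, φ j (x j))

/-- `T_i(φ)(x_i) = ∫_{X_{-i}} K(x_i, x_{-i}) exp(∑_j φ_j(x_j)) dm_{-i}(x_{-i})`.
Since every `m j` is a probability measure, integrating over the full product
(with the `i`-th coordinate replaced by `x_i` via `Function.update`) agrees with
integrating over `∏_{j ≠ i} X_j`. -/
def schrT {N : ℕ} {X : Fin N → Type*} [∀ i, MeasurableSpace (X i)]
    (m : ∀ i, Measure (X i)) (K : (∀ i, X i) → ℝ) (φ : ∀ i, X i → ℝ)
    (i : Fin N) (xi : X i) : ℝ :=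
  ∫ y, gammaFn K φ (Function.update y i xi) ∂Measure.pi m

/-- `L_{φ,i}(h)(x_i)`, the conditional-expectation type operator obtained by
linearizing the Schrödinger system. -/
def schrL {N : ℕ} {X : Fin N → Type*} [∀ i, MeasurableSpace (X i)]
    (m : ∀ i, Measure (X i)) (K : (∀ i, X i) → ℝ) (φ h : ∀ i, X i → ℝ)
    (i : Fin N) (xi : X i) : ℝ :=
  (∫ y, gammaFn K φ (Function.update y i xi) *
      ∑ j ∈ Finset.univ.erase i, h j (Function.update y i xi j) ∂Measure.pi m) /
  (∫ y, gammaFn K φ (Function.update y i xi) ∂Measure.pi m)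

/-- A tuple of essentially bounded measurable functions. -/
def BddTuple {N : ℕ} {X : Fin N → Type*} [∀ i, MeasurableSpace (X i)]
    (m : ∀ i, Measure (X i)) (φ : ∀ i, X i → ℝ) : Prop :=
  ∀ i, Measurable (φ i) ∧ MemLp (φ i) ⊤ (m i)

/-- Membership in `E`: essentially bounded measurable tuples with
`∫ φ_i dm_i = 0` for `i = 1, …, N-1` (i.e. all but the last index). -/
def InE {N : ℕ} {X : Fin N → Type*} [∀ i, MeasurableSpace (X i)]
    (m : ∀ i, Measure (X i)) (φ : ∀ i, X i → ℝ) : Prop :=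
  BddTuple m φ ∧ ∀ i : Fin N, (i : ℕ) < N - 1 → ∫ x, φ i x ∂m i = 0

/-- Membership in `F`: essentially bounded measurable tuples whose integrals all coincide. -/
def InF {N : ℕ} {X : Fin N → Type*} [∀ i, MeasurableSpace (X i)]
    (m : ∀ i, Measure (X i)) (μ : ∀ i, X i → ℝ) : Prop :=
  BddTuple m μ ∧ ∀ i j, ∫ x, μ i x ∂m i = ∫ x, μ j x ∂m j

/-- Membership in `F_{++}`: members of `F` which are bounded away from `0`. -/
def InFpp {N : ℕ} {X : Fin N → Type*} [∀ i, MeasurableSpace (X i)]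
    (m : ∀ i, Measure (X i)) (μ : ∀ i, X i → ℝ) : Prop :=
  InF m μ ∧ ∀ i, ∃ c : ℝ, 0 < c ∧ ∀ᵐ x ∂m i, c ≤ μ i x

/-- Membership in `F_{++,M}`: members of `F_{++}` with `1/M ≤ μ_i ≤ M` a.e. -/
def InFppM {N : ℕ} {X : Fin N → Type*} [∀ i, MeasurableSpace (X i)]
    (m : ∀ i, Measure (X i)) (M : ℝ) (μ : ∀ i, X i → ℝ) : Prop :=
  InFpp m μ ∧ ∀ i, ∀ᵐ x ∂m i, 1 / M ≤ μ i x ∧ μ i x ≤ M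

end

/-!
Write `S = h₁ ⊕ ⋯ ⊕ h_N` and `γ = γ_φ`, which is bounded above and away from `0`. The equation
`h_i + L_{φ,i}(h) = 0` says that the `γ`-weighted integral of `S` over `x_{-i}` vanishes for a.e.
`x_i`. Multiplying by `h_i(x_i)`, integrating and summing over `i` gives `∫ γ S² dm = 0`, so `S = 0`
a.e. A sum of functions of separate variables vanishes a.e. only if each `h_i` is a.e. the constant
`∫ h_i dm_i`, and these constants sum to `∫ S dm = 0`.
-/

open Function

section ProductSlices

variable {ι : Type*} [Fintype ι] [DecidableEq ι] {X : ι → Type*} [∀ i, MeasurableSpace (X i)]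
  {m : ∀ i, Measure (X i)} [∀ i, IsProbabilityMeasure (m i)]

theorem measurePreserving_update_prod (i : ι) :
    MeasurePreserving (fun p : X i × (∀ j, X j) => update p.2 i p.1)
      ((m i).prod (Measure.pi m)) (Measure.pi m) := by
  have hmeas : Measurable (fun p : X i × (∀ j, X j) => update p.2 i p.1) := by fun_prop
  refine ⟨hmeas, (Measure.pi_eq fun s hs => ?_).symm⟩
  have hpre : (fun p : X i × (∀ j, X j) => update p.2 i p.1) ⁻¹' Set.univ.pi s
      = s i ×ˢ Set.univ.pi (update s i Set.univ) := by
    ext ⟨xi, y⟩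
    simp only [Set.mem_preimage, Set.mem_univ_pi, Set.mem_prod]
    refine ⟨fun hp => ⟨by simpa using hp i, fun j => ?_⟩, fun ⟨hxi, hy⟩ j => ?_⟩ <;>
      rcases eq_or_ne j i with rfl | hj
    · simp
    · simpa [update_of_ne hj] using hp j
    · simpa using hxi
    · simpa [update_of_ne hj] using hy j
  rw [Measure.map_apply hmeas (.univ_pi hs), hpre, Measure.prod_prod, Measure.pi_pi,
    ← Finset.mul_prod_erase _ _ (Finset.mem_univ i),
    ← Finset.mul_prod_erase _ _ (Finset.mem_univ i)]
  simp only [update_self, measure_univ, one_mul]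
  congr 1
  exact Finset.prod_congr rfl fun j hj => by rw [update_of_ne (Finset.ne_of_mem_erase hj)]

theorem ae_ae_update_of_ae {Q : (∀ j, X j) → Prop} (hQ : ∀ᵐ x ∂Measure.pi m, Q x) (i : ι) :
    ∀ᵐ xi ∂m i, ∀ᵐ y ∂Measure.pi m, Q (update y i xi) :=
  Measure.ae_ae_of_ae_prod <|
    (measurePreserving_update_prod (m := m) i).quasiMeasurePreserving.ae hQ

theorem MeasureTheory.Integrable.comp_update_prod {E : Type*} [NormedAddCommGroup E]
    {f : (∀ j, X j) → E} (hf : Integrable f (Measure.pi m)) (i : ι) :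
    Integrable (fun p : X i × (∀ j, X j) => f (update p.2 i p.1)) ((m i).prod (Measure.pi m)) :=
  (measurePreserving_update_prod (m := m) i).integrable_comp_of_integrable hf

theorem MeasureTheory.Integrable.ae_integrable_comp_update {E : Type*} [NormedAddCommGroup E]
    {f : (∀ j, X j) → E} (hf : Integrable f (Measure.pi m)) (i : ι) :
    ∀ᵐ xi ∂m i, Integrable (fun y => f (update y i xi)) (Measure.pi m) :=
  (hf.comp_update_prod i).prod_right_ae

theorem integral_eq_integral_integral_update {E : Type*} [NormedAddCommGroup E] [NormedSpace ℝ E]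
    {f : (∀ j, X j) → E} (hf : Integrable f (Measure.pi m)) (i : ι) :
    ∫ x, f x ∂Measure.pi m = ∫ xi, ∫ y, f (update y i xi) ∂Measure.pi m ∂m i := by
  have hmp := measurePreserving_update_prod (m := m) i
  rw [← integral_prod _ (hf.comp_update_prod i)]
  conv_lhs => rw [← hmp.map_eq]
  exact integral_map hmp.aemeasurable (by rw [hmp.map_eq]; exact hf.aestronglyMeasurable)

end ProductSlices

section Oplus

variable {ι : Type*} [Fintype ι] {X : ι → Type*}

def oplus (h : ∀ i, X i → ℝ) (x : ∀ i, X i) : ℝ :=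
  ∑ i, h i (x i)

theorem oplus_eq_add_sum_erase [DecidableEq ι] (h : ∀ i, X i → ℝ) (x : ∀ i, X i) (i : ι) :
    oplus h x = h i (x i) + ∑ j ∈ Finset.univ.erase i, h j (x j) :=
  (Finset.add_sum_erase _ _ (Finset.mem_univ i)).symm

theorem oplus_update [DecidableEq ι] (h : ∀ i, X i → ℝ) (y : ∀ i, X i) (i : ι) (xi : X i) :
    oplus h (update y i xi) = oplus h y - h i (y i) + h i xi := by
  simp only [oplus, apply_update (fun j => h j), Finset.sum_update_of_mem (Finset.mem_univ i)]
  rw [← Finset.add_sum_erase _ _ (Finset.mem_univ i), Finset.sdiff_singleton_eq_erase]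
  ring

variable [∀ i, MeasurableSpace (X i)] {m : ∀ i, Measure (X i)} [∀ i, IsProbabilityMeasure (m i)]
  {h : ∀ i, X i → ℝ}

theorem memLp_oplus {p : ℝ≥0∞} (hh : ∀ i, MemLp (h i) p (m i)) :
    MemLp (oplus h) p (Measure.pi m) := by
  convert memLp_finsetSum' Finset.univ fun i _ =>
    (hh i).comp_measurePreserving (measurePreserving_eval m i) using 1
  ext x
  simp [oplus]

theorem integral_oplus (hh : ∀ i, Integrable (h i) (m i)) :
    ∫ x, oplus h x ∂Measure.pi m = ∑ i, ∫ t, h i t ∂m i := by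
  unfold oplus
  rw [integral_finsetSum _ fun i _ => integrable_comp_eval (hh i)]
  exact Finset.sum_congr rfl fun i _ => integral_comp_eval (hh i).aestronglyMeasurable

theorem integral_comp_eval_mul_eq_zero [DecidableEq ι] {i : ι} {g : X i → ℝ} {F : (∀ j, X j) → ℝ}
    (hgF : Integrable (fun x => g (x i) * F x) (Measure.pi m))
    (hF : ∀ᵐ xi ∂m i, ∫ y, F (update y i xi) ∂Measure.pi m = 0) :
    ∫ x, g (x i) * F x ∂Measure.pi m = 0 := by
  rw [integral_eq_integral_integral_update hgF i]
  refine integral_eq_zero_of_ae ?_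
  filter_upwards [hF] with xi hxi
  simp only [update_self, integral_const_mul, hxi, mul_zero, Pi.zero_apply]

end Oplus

section Kernel

variable {ι : Type*} [Fintype ι] [DecidableEq ι] {X : ι → Type*} [∀ i, MeasurableSpace (X i)]
  {m : ∀ i, Measure (X i)} [∀ i, IsProbabilityMeasure (m i)] {h : ∀ i, X i → ℝ}

theorem forall_ae_integral_mul_oplus_update_eq_zero_iff {w : (∀ j, X j) → ℝ} {β : ℝ}
    (hwm : AEStronglyMeasurable w (Measure.pi m)) (hw : ∀ᵐ x ∂Measure.pi m, 0 < w x ∧ w x ≤ β)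
    (hh : ∀ i, MemLp (h i) 2 (m i)) :
    (∀ i, ∀ᵐ xi ∂m i, ∫ y, w (update y i xi) * oplus h (update y i xi) ∂Measure.pi m = 0) ↔
      ∀ᵐ x ∂Measure.pi m, oplus h x = 0 := by
  constructor
  · intro hF
    have hwS : MemLp (fun x => w x * oplus h x) 2 (Measure.pi m) :=
      (memLp_oplus hh).mul' (p := ⊤) <| MemLp.of_bound hwm β <| hw.mono fun x hx => by
        rw [Real.norm_eq_abs, abs_of_pos hx.1]; exact hx.2
    have hint : ∀ i, Integrable (fun x => h i (x i) * (w x * oplus h x)) (Measure.pi m) := fun i =>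
      ((hh i).comp_measurePreserving (measurePreserving_eval m i)).integrable_mul hwS
    have henergy : ∫ x, oplus h x * (w x * oplus h x) ∂Measure.pi m = 0 := by
      have hsplit : (fun x => oplus h x * (w x * oplus h x)) =
          fun x => ∑ i, h i (x i) * (w x * oplus h x) :=
        funext fun x => Finset.sum_mul ..
      rw [hsplit, integral_finsetSum _ fun i _ => hint i]
      exact Finset.sum_eq_zero fun i _ => integral_comp_eval_mul_eq_zero (hint i) (hF i)
    have hnonneg : 0 ≤ᵐ[Measure.pi m] fun x => oplus h x * (w x * oplus h x) :=
      hw.mono fun x hx => by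
        show 0 ≤ oplus h x * (w x * oplus h x)
        rw [mul_left_comm]; exact mul_nonneg hx.1.le (mul_self_nonneg _)
    filter_upwards [(integral_eq_zero_iff_of_nonneg_ae hnonneg
      ((memLp_oplus hh).integrable_mul hwS)).1 henergy, hw] with x hx hwx
    simpa [hwx.1.ne'] using hx
  · intro hS i
    filter_upwards [ae_ae_update_of_ae hS i] with xi hxi
    refine integral_eq_zero_of_ae (hxi.mono fun y hy => ?_)
    simp [hy]

theorem ae_oplus_eq_zero_iff_exists_const (hh : ∀ i, Integrable (h i) (m i)) :
    (∀ᵐ x ∂Measure.pi m, oplus h x = 0) ↔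
      ∃ c : ι → ℝ, ∑ i, c i = 0 ∧ ∀ i, h i =ᵐ[m i] fun _ => c i := by
  constructor
  · intro hS
    have hsum : ∑ i, ∫ t, h i t ∂m i = 0 := by
      rw [← integral_oplus hh, integral_eq_zero_of_ae hS]
    refine ⟨fun i => ∫ t, h i t ∂m i, hsum, fun i => ?_⟩
    filter_upwards [ae_ae_update_of_ae hS i] with xi hxi
    have hslice : ∫ y, oplus h (update y i xi) ∂Measure.pi m = h i xi - ∫ t, h i t ∂m i := by
      have hS1 : Integrable (oplus h) (Measure.pi m) :=
        integrable_finsetSum _ fun j _ => integrable_comp_eval (hh j)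
      have hhi : Integrable (fun y : ∀ j, X j => h i (y i)) (Measure.pi m) :=
        integrable_comp_eval (hh i)
      have hdiff : Integrable (fun y => oplus h y - h i (y i)) (Measure.pi m) := hS1.sub hhi
      simp only [oplus_update]
      rw [integral_add hdiff (integrable_const _), integral_sub hS1 hhi, integral_oplus hh,
        hsum, integral_comp_eval (hh i).aestronglyMeasurable, integral_const]
      simp only [probReal_univ, one_smul]
      ring
    rw [integral_eq_zero_of_ae hxi] at hslice
    linarith
  · rintro ⟨c, hc, hhc⟩
    have hc' : ∀ᵐ x ∂Measure.pi m, ∀ i, h i (x i) = c i :=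
      ae_all_iff.2 fun i => (measurePreserving_eval m i).quasiMeasurePreserving.ae (hhc i)
    filter_upwards [hc'] with x hx
    simp [oplus, hx, hc]

end Kernel

section Schrodinger

variable {N : ℕ} {X : Fin N → Type*} [∀ i, MeasurableSpace (X i)]
  {m : ∀ i, Measure (X i)} {K : (∀ i, X i) → ℝ} {φ h : ∀ i, X i → ℝ}

theorem measurable_gammaFn (hK : Measurable K) (hφ : ∀ i, Measurable (φ i)) :
    Measurable (gammaFn K φ) :=
  hK.mul (Finset.measurable_sum _ fun j _ => (hφ j).comp (measurable_pi_apply j)).exp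

theorem add_schrL_eq_div {i : Fin N} {xi : X i} (hT : schrT m K φ i xi ≠ 0)
    (hγ : Integrable (fun y => gammaFn K φ (update y i xi)) (Measure.pi m))
    (hγh : Integrable (fun y => gammaFn K φ (update y i xi) *
      ∑ j ∈ Finset.univ.erase i, h j (update y i xi j)) (Measure.pi m)) :
    h i xi + schrL m K φ h i xi =
      (∫ y, gammaFn K φ (update y i xi) * oplus h (update y i xi) ∂Measure.pi m) /
        schrT m K φ i xi := by
  have hsplit : (fun y => gammaFn K φ (update y i xi) * oplus h (update y i xi)) =
      fun y => gammaFn K φ (update y i xi) * h i xi +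
        gammaFn K φ (update y i xi) * ∑ j ∈ Finset.univ.erase i, h j (update y i xi j) := by
    ext y
    rw [oplus_eq_add_sum_erase h _ i, update_self, mul_add]
  rw [schrT] at hT ⊢
  rw [schrL, hsplit, integral_add (hγ.mul_const _) hγh, integral_mul_const, add_div,
    mul_div_cancel_left₀ _ hT]

variable [∀ i, IsProbabilityMeasure (m i)]

theorem exists_ae_bounds_gammaFn {a b : ℝ} (ha : 0 < a)
    (hKb : ∀ᵐ x ∂Measure.pi m, a ≤ K x ∧ K x ≤ b) (hφ : ∀ i, MemLp (φ i) ⊤ (m i)) :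
    ∃ α β : ℝ, 0 < α ∧ ∀ᵐ x ∂Measure.pi m, α ≤ gammaFn K φ x ∧ gammaFn K φ x ≤ β := by
  set C := ∑ i, lpNorm (φ i) ⊤ (m i)
  have hφC : ∀ᵐ x ∂Measure.pi m, |∑ i, φ i (x i)| ≤ C := by
    have hφx := ae_all_iff.2 fun i => (measurePreserving_eval m i).quasiMeasurePreserving.ae
      (ae_le_lpNorm_exponent_top (hφ i))
    filter_upwards [hφx] with x hx
    exact (Finset.abs_sum_le_sum_abs _ _).trans (Finset.sum_le_sum fun i _ => hx i)
  refine ⟨a * Real.exp (-C), b * Real.exp C, by positivity, ?_⟩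
  filter_upwards [hKb, hφC] with x hKx hx
  have hexp := abs_le.1 hx
  exact ⟨mul_le_mul hKx.1 (Real.exp_le_exp.2 hexp.1) (Real.exp_pos _).le (ha.le.trans hKx.1),
    mul_le_mul hKx.2 (Real.exp_le_exp.2 hexp.2) (Real.exp_pos _).le
      (ha.le.trans (hKx.1.trans hKx.2))⟩

theorem ae_le_schrT {α : ℝ} (hγ : Integrable (gammaFn K φ) (Measure.pi m))
    (hα : ∀ᵐ x ∂Measure.pi m, α ≤ gammaFn K φ x) (i : Fin N) :
    ∀ᵐ xi ∂m i, α ≤ schrT m K φ i xi := by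
  filter_upwards [ae_ae_update_of_ae hα i, hγ.ae_integrable_comp_update i] with xi hxi hint
  calc α = ∫ _, α ∂Measure.pi m := by simp
    _ ≤ schrT m K φ i xi := integral_mono_ae (integrable_const α) hint hxi

theorem ae_add_schrL_eq_zero_iff {α β : ℝ} (hγm : Measurable (gammaFn K φ)) (hα : 0 < α)
    (hγ : ∀ᵐ x ∂Measure.pi m, α ≤ gammaFn K φ x ∧ gammaFn K φ x ≤ β)
    (hh : ∀ i, MemLp (h i) 2 (m i)) (i : Fin N) :
    (∀ᵐ xi ∂m i, h i xi + schrL m K φ h i xi = 0) ↔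
      ∀ᵐ xi ∂m i, ∫ y, gammaFn K φ (update y i xi) * oplus h (update y i xi) ∂Measure.pi m = 0 := by
  have hγi : Integrable (gammaFn K φ) (Measure.pi m) :=
    Integrable.of_mem_Icc α β hγm.aemeasurable hγ
  have hγh : Integrable (fun x => gammaFn K φ x * ∑ j ∈ Finset.univ.erase i, h j (x j))
      (Measure.pi m) :=
    (integrable_finsetSum _ fun j _ => integrable_comp_eval ((hh j).integrable one_le_two)).bdd_mul
      hγm.aestronglyMeasurable (c := β) (hγ.mono fun x hx => by
        rw [Real.norm_eq_abs, abs_of_pos (hα.trans_le hx.1)]; exact hx.2)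
  refine eventually_congr ?_
  filter_upwards [ae_le_schrT hγi (hγ.mono fun _ hx => hx.1) i, hγi.ae_integrable_comp_update i,
    hγh.ae_integrable_comp_update i] with xi hT hγxi hγhxi
  have hT0 : schrT m K φ i xi ≠ 0 := (hα.trans_le hT).ne'
  rw [add_schrL_eq_div hT0 hγxi hγhxi, div_eq_zero_iff, or_iff_left hT0]

end Schrodinger

theorem kernel_linearized_operator_general
    {N : ℕ} {X : Fin N → Type*} [∀ i, MeasurableSpace (X i)]
    (m : ∀ i, MeasureTheory.Measure (X i)) [∀ i, MeasureTheory.IsProbabilityMeasure (m i)]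
    (K : (∀ i, X i) → ℝ) (a b : ℝ) (ha : 0 < a)
    (hK : Measurable K) (hKb : ∀ᵐ x ∂MeasureTheory.Measure.pi m, a ≤ K x ∧ K x ≤ b)
    (φ : ∀ i, X i → ℝ) (hφ : BddTuple m φ)
    (h : ∀ i, X i → ℝ) (hh2 : ∀ i, MemLp (h i) 2 (m i)) :
    (∀ i, ∀ᵐ xi ∂m i, h i xi + schrL m K φ h i xi = 0) ↔
      ∃ c : Fin N → ℝ, ∑ i, c i = 0 ∧ ∀ i, h i =ᵐ[m i] fun _ => c i := by
  obtain ⟨α, β, hα, hγ⟩ := exists_ae_bounds_gammaFn ha hKb fun i => (hφ i).2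
  have hγm := measurable_gammaFn hK fun i => (hφ i).1
  rw [forall_congr' fun i => ae_add_schrL_eq_zero_iff hγm hα hγ hh2 i,
    forall_ae_integral_mul_oplus_update_eq_zero_iff hγm.aestronglyMeasurable
      (hγ.mono fun _ hx => ⟨hα.trans_le hx.1, hx.2⟩) hh2,
    ae_oplus_eq_zero_iff_exists_const fun i => (hh2 i).integrable one_le_two]

/-- Kernel of the linearized Schrödinger operator: `h + L_φ(h) = 0`
a.e. iff the components of `h` are a.e. equal to constants summing to `0`
(hence the kernel of `id + L_φ` has dimension `N - 1`). -/
theorem kernel_linearized_operator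
    {N : ℕ} (hN : 2 ≤ N) {X : Fin N → Type*} [∀ i, MeasurableSpace (X i)]
    (m : ∀ i, MeasureTheory.Measure (X i)) [∀ i, MeasureTheory.IsProbabilityMeasure (m i)]
    (K : (∀ i, X i) → ℝ) (a b : ℝ) (ha : 0 < a) (hab : a ≤ b)
    (hK : Measurable K) (hKb : ∀ᵐ x ∂MeasureTheory.Measure.pi m, a ≤ K x ∧ K x ≤ b)
    (φ : ∀ i, X i → ℝ) (hφ : BddTuple m φ)
    (h : ∀ i, X i → ℝ) (hhm : ∀ i, Measurable (h i)) (hh2 : ∀ i, MemLp (h i) 2 (m i)) :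
    (∀ i, ∀ᵐ xi ∂m i, h i xi + schrL m K φ h i xi = 0) ↔
      ∃ c : Fin N → ℝ, ∑ i, c i = 0 ∧ ∀ i, h i =ᵐ[m i] fun _ => c i :=
  kernel_linearized_operator_general m K a b ha hK hKb φ hφ h hh2
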